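/- In the partial crossed product H_ss # H4, the element 1 # v equals k1(1#1) + k2(e1#1) + k3(e2#1) - k4(e3#1); i.e., a#v is a linear combination of elements b#1 for all a. -/

import Mathlib

open Quaternion TensorProduct

noncomputable section

/-- Sweedler's Hopf algebra `H₄` as a vector space over `ℝ`,
with basis `1, g, ν, gν` indexed by `Fin 4`. -/
abbrev H4 := Fin 4 → ℝ

namespace H4

/-- The canonical basis `1, g, ν, gν` of Sweedler's Hopf algebra. -/
def B : Module.Basis (Fin 4) ℝ H4 := Pi.basisFun ℝ (Fin 4)

/-- The unit `1` of `H₄`. -/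
def u : H4 := B 0
/-- The grouplike element `g` of `H₄`. -/
def g : H4 := B 1
/-- The element `ν` of `H₄`. -/
def v : H4 := B 2
/-- The element `gν` of `H₄`. -/
def w : H4 := B 3

/-- The multiplication of Sweedler's Hopf algebra, as a bilinear map:
`g² = 1`, `ν² = 0`, `gν = -νg`. -/
def mul4 : H4 →ₗ[ℝ] H4 →ₗ[ℝ] H4 :=
  B.constr ℝ ![B.constr ℝ ![u, g, v, w],
               B.constr ℝ ![g, u, w, v],
               B.constr ℝ ![v, -w, 0, 0],
               B.constr ℝ ![w, -v, 0, 0]]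

/-- The comultiplication of Sweedler's Hopf algebra:
`Δ(1) = 1⊗1`, `Δ(g) = g⊗g`, `Δ(ν) = g⊗ν + ν⊗1`, `Δ(gν) = 1⊗gν + gν⊗g`. -/
def Δ : H4 →ₗ[ℝ] H4 ⊗[ℝ] H4 :=
  B.constr ℝ ![u ⊗ₜ u, g ⊗ₜ g, g ⊗ₜ v + v ⊗ₜ u, u ⊗ₜ w + w ⊗ₜ g]

end H4

/-- The split semi-quaternion algebra `H_ss`:
`e1² = 1`, `e2² = 0`, `e3² = 0`, `e1e2 = e3 = -e2e1`,
`e2e3 = 0 = -e3e2`, `e3e1 = -e2 = -e1e3`. -/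
abbrev Hss := ℍ[ℝ, 1, 0]

namespace Hss
def e1 : Hss := ⟨0, 1, 0, 0⟩
def e2 : Hss := ⟨0, 0, 1, 0⟩
def e3 : Hss := ⟨0, 0, 0, 1⟩
/-- The basis `1, e1, e2, e3` of the split semi-quaternion algebra. -/
def Qb : Module.Basis (Fin 4) ℝ Hss := QuaternionAlgebra.basisOneIJK 1 0 0
end Hss

variable (k1 k2 k3 k4 l1 l2 l3 l4 : ℝ)

/-- The value `ν · 1 = ω(1,ν) = ω(ν,1) = k₁ + k₂e₁ + k₃e₂ - k₄e₃`. -/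
def nu1 : Hss := k1 • 1 + k2 • Hss.e1 + k3 • Hss.e2 - k4 • Hss.e3

/-- The value `gν · 1 = ω(1,gν) = ω(gν,1) = l₁ + l₂e₁ + l₃e₂ + l₄e₃`. -/
def gnu1 : Hss := l1 • 1 + l2 • Hss.e1 + l3 • Hss.e2 + l4 • Hss.e3

/-- The partial action `· : H₄ ⊗ H_ss → H_ss` from the paper:
`1` acts as the identity, `g · x = 0`, and `ν`, `gν` act via the parameters
`k₁,…,k₄,l₁,…,l₄` as in the table. -/
def actSS : H4 →ₗ[ℝ] Hss →ₗ[ℝ] Hss :=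
  H4.B.constr ℝ
    ![LinearMap.id, 0,
      Hss.Qb.constr ℝ
        ![nu1 k1 k2 k3 k4,
          k2 • 1 + k1 • Hss.e1 + k4 • Hss.e2 - k3 • Hss.e3,
          k1 • Hss.e2 + k2 • Hss.e3,
          k2 • Hss.e2 + k1 • Hss.e3],
      Hss.Qb.constr ℝ
        ![gnu1 l1 l2 l3 l4,
          l2 • 1 + l1 • Hss.e1 + l4 • Hss.e2 + l3 • Hss.e3,
          l1 • Hss.e2 - l2 • Hss.e3,
          -l2 • Hss.e2 + l1 • Hss.e3]]

/-- The value `ω(ν,ν) = (k₁²+k₂²) + 2k₁k₂e₁ + 2k₁k₃e₂ - 2k₁k₄e₃`. -/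
def omvv : Hss :=
  (k1 ^ 2 + k2 ^ 2) • 1 + (2 * k1 * k2) • Hss.e1
    + (2 * k1 * k3) • Hss.e2 - (2 * k1 * k4) • Hss.e3

/-- The value `ω(ν,gν) = ω(gν,ν)`. -/
def omvw : Hss :=
  (k1 * l1 + k2 * l2) • 1 + (k2 * l1 + k1 * l2) • Hss.e1
    + (k3 * l1 + k4 * l2 + k1 * l3 + k2 * l4) • Hss.e2
    + (-(k4 * l1) - k3 * l2 + k2 * l3 + k1 * l4) • Hss.e3

/-- The cocycle `ω : H₄ ⊗ H₄ → H_ss` from the paper's table. -/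
def omSS : H4 →ₗ[ℝ] H4 →ₗ[ℝ] Hss :=
  H4.B.constr ℝ
    ![H4.B.constr ℝ ![1, 0, nu1 k1 k2 k3 k4, gnu1 l1 l2 l3 l4],
      0,
      H4.B.constr ℝ ![nu1 k1 k2 k3 k4, 0, omvv k1 k2 k3 k4,
        omvw k1 k2 k3 k4 l1 l2 l3 l4],
      H4.B.constr ℝ ![gnu1 l1 l2 l3 l4, 0,
        omvw k1 k2 k3 k4 l1 l2 l3 l4, 0]]

/-- The map `h ↦ (h₁·1) ⊗ h₂` of `H₄` into `H_ss ⊗ H₄`. -/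
def sharpAux : H4 →ₗ[ℝ] Hss ⊗[ℝ] H4 :=
  (TensorProduct.map ((actSS k1 k2 k3 k4 l1 l2 l3 l4).flip 1) LinearMap.id) ∘ₗ H4.Δ

/-- The bilinear map `(a, h) ↦ a ♯ h = a(h₁·1) ⊗ h₂` defining the elements of the
partial crossed product `H_ss ♯ H₄ = (H_ss ⊗ H₄)(1 ⊗ 1)`. -/
def sharpSS : Hss →ₗ[ℝ] H4 →ₗ[ℝ] Hss ⊗[ℝ] H4 :=
  ((LinearMap.llcomp ℝ H4 (Hss ⊗[ℝ] H4) (Hss ⊗[ℝ] H4)).flip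
      (sharpAux k1 k2 k3 k4 l1 l2 l3 l4)) ∘ₗ
    LinearMap.rTensorHom H4 ∘ₗ LinearMap.mul ℝ Hss

lemma H4.Δ_u : H4.Δ H4.u = H4.u ⊗ₜ H4.u := by
  rw [H4.Δ, H4.u, Module.Basis.constr_basis]; rfl

lemma H4.Δ_v : H4.Δ H4.v = H4.g ⊗ₜ H4.v + H4.v ⊗ₜ H4.u := by
  rw [H4.Δ, H4.v, Module.Basis.constr_basis]; rfl

lemma Hss.Qb_zero : Hss.Qb 0 = 1 := by
  ext <;> simp [Hss.Qb, QuaternionAlgebra.basisOneIJK, Module.Basis.ofEquivFun]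

lemma actSS_u : actSS k1 k2 k3 k4 l1 l2 l3 l4 H4.u = LinearMap.id := by
  rw [H4.u, actSS, Module.Basis.constr_basis]; rfl

lemma actSS_g : actSS k1 k2 k3 k4 l1 l2 l3 l4 H4.g = 0 := by
  rw [H4.g, actSS, Module.Basis.constr_basis]; rfl

lemma actSS_v_one : actSS k1 k2 k3 k4 l1 l2 l3 l4 H4.v 1 = nu1 k1 k2 k3 k4 := by
  rw [H4.v, actSS, Module.Basis.constr_basis]
  exact (congrArg _ Hss.Qb_zero.symm).trans (Module.Basis.constr_basis _ _ _ 0)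

lemma sharpAux_u : sharpAux k1 k2 k3 k4 l1 l2 l3 l4 H4.u = (1 : Hss) ⊗ₜ H4.u := by
  rw [sharpAux, LinearMap.comp_apply, H4.Δ_u, map_tmul, LinearMap.flip_apply, actSS_u]; rfl

-- The summand `g ⊗ ν` of `Δ(ν)` dies because `g · 1 = 0`.
lemma sharpAux_v : sharpAux k1 k2 k3 k4 l1 l2 l3 l4 H4.v = nu1 k1 k2 k3 k4 ⊗ₜ H4.u := by
  rw [sharpAux, LinearMap.comp_apply, H4.Δ_v, map_add, map_tmul, map_tmul,
    LinearMap.flip_apply, LinearMap.flip_apply, actSS_g, actSS_v_one, LinearMap.zero_apply,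
    zero_tmul, zero_add]; rfl

lemma sharpSS_apply (a : Hss) (h : H4) :
    sharpSS k1 k2 k3 k4 l1 l2 l3 l4 a h =
      LinearMap.rTensor H4 (LinearMap.mul ℝ Hss a) (sharpAux k1 k2 k3 k4 l1 l2 l3 l4 h) :=
  rfl

lemma sharpSS_apply_u (a : Hss) : sharpSS k1 k2 k3 k4 l1 l2 l3 l4 a H4.u = a ⊗ₜ H4.u := by
  rw [sharpSS_apply, sharpAux_u, LinearMap.rTensor_tmul, LinearMap.mul_apply', mul_one]

lemma sharpSS_apply_v (a : Hss) :
    sharpSS k1 k2 k3 k4 l1 l2 l3 l4 a H4.v = (a * nu1 k1 k2 k3 k4) ⊗ₜ H4.u := by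
  rw [sharpSS_apply, sharpAux_v, LinearMap.rTensor_tmul, LinearMap.mul_apply']

/-- `1♯ν = k₁(1♯1) + k₂(e₁♯1) + k₃(e₂♯1) - k₄(e₃♯1)`; more generally
every `a♯ν` is of the form `b♯1`. -/
theorem sharpSS_one_v :
    (sharpSS k1 k2 k3 k4 l1 l2 l3 l4) 1 H4.v =
      k1 • (sharpSS k1 k2 k3 k4 l1 l2 l3 l4) 1 H4.u + k2 • (sharpSS k1 k2 k3 k4 l1 l2 l3 l4) Hss.e1 H4.u + k3 • (sharpSS k1 k2 k3 k4 l1 l2 l3 l4) Hss.e2 H4.u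
        - k4 • (sharpSS k1 k2 k3 k4 l1 l2 l3 l4) Hss.e3 H4.u ∧
    ∀ a : Hss, ∃ b : Hss, (sharpSS k1 k2 k3 k4 l1 l2 l3 l4) a H4.v = (sharpSS k1 k2 k3 k4 l1 l2 l3 l4) b H4.u := by
  refine ⟨?_, fun a => ⟨a * nu1 k1 k2 k3 k4, by rw [sharpSS_apply_v, sharpSS_apply_u]⟩⟩
  simp only [sharpSS_apply_v, sharpSS_apply_u, one_mul, nu1, sub_tmul, add_tmul, smul_tmul']
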